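/- arXiv:2106.11898 — 4 statements merged into one kernel-verified Lean document; each statement's English description precedes it below -/
import Mathlib

section
/- Convergence criterion for motivic Euler products (Proposition 4.7.2.1-type criterion, Proposition "linear-conv-criterion" of the paper, stated with the defining properties of the weight as hypotheses): Fix an integer r ≥ 1, a tuple ρ ∈ (ℤ_{≥1})^r, a natural number M, and real numbers w₀ ≥ 0, ε > 0, α < 1 and β ≥ 0. Let (w_i)_{i ∈ ℕ^r∖{0}} be real numbers such that w_i ≤ (⟨ρ,i⟩ − 1/2 − ε)·w₀ whenever 1 ≤ ⟨ρ,i⟩ ≤ M, and w_i ≤ (α·⟨ρ,i⟩ + β − 1/2)·w₀ whenever ⟨ρ,i⟩ > M. Suppose (b_m)_{m ∈ ℕ^r∖{0}} is a family in R such that every b_m is a finite sum b_m = Σ_π s_π over the partitions π of m, where each s_π ∈ R satisfies w(s_π) ≤ Σ_i π(i)·w_i + (1/2)·(Σ_i π(i))·w₀. Then there exist δ ∈ (0, 1/2] and δ' > 0 such that for every m ∈ ℕ^r∖{0} and all elements a₁, …, a_r ∈ R with w(a_k) < −w₀·(1 − δ + β/(M+1)) for k = 1, …, r, one has w(b_m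 · a₁^{ρ₁ m₁} ⋯ a_r^{ρ_r m_r}) ≤ −δ'·⟨ρ, m⟩. -/
/-!
Every summand `s_π · ∏ a_k^{ρ_k m_k}` of `b_m · ∏ a_k^{ρ_k m_k}` is bounded separately. With
`C = w₀ (1 - δ + β/(M+1))` the hypotheses on `w_i` give `w_i + w₀/2 ≤ ⟨ρ,i⟩ C` for every part `i`,
so `w(s_π) ≤ C ⟨ρ,m⟩`, while each `a_k` contributes weight `< -C` per unit of `⟨ρ,m⟩`. Since
the weight takes integer values, `w(a_k) < -C` upgrades to `w(a_k) ≤ ⌈-C⌉ - 1`, which gives the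
uniform gain `δ' = -C - (⌈-C⌉ - 1) > 0`.
-/

open Finset

/-- The weight function, viewed with values in `ℝ ∪ {-∞}`. -/
noncomputable def weightR {R : Type*} (w : R → WithBot ℤ) (x : R) : WithBot ℝ :=
  (w x).map (fun n : ℤ => (n : ℝ))

/-- The pairing `⟨ρ, m⟩ = ∑ α, ρ α * m α`. -/
def pairing {r : ℕ} (ρ m : Fin r → ℕ) : ℕ := ∑ α, ρ α * m α

/-- `π` is a partition of `m ∈ ℕ^r ∖ {0}`: a finitely supported function on
`ℕ^r ∖ {0}` with `∑ i, π i • i = m`. -/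
def IsPartitionOf {r : ℕ} (π : (Fin r → ℕ) →₀ ℕ) (m : Fin r → ℕ) : Prop :=
  π 0 = 0 ∧ (π.sum fun i n => n • i) = m

section WeightInequalities

theorem apply_sum_le {R N ι : Type*} [AddCommMonoid R] [LinearOrder N] [OrderBot N] {v : R → N}
    (hv0 : v 0 = ⊥) (hv : ∀ x y, v (x + y) ≤ max (v x) (v y)) {s : Finset ι} {f : ι → R}
    {c : N} (hf : ∀ i ∈ s, v (f i) ≤ c) : v (∑ i ∈ s, f i) ≤ c :=
  sum_induction f (fun x => v x ≤ c) (fun x y hx hy => (hv x y).trans (max_le hx hy))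
    (hv0 ▸ bot_le) hf

variable {R N : Type*} [CommMonoid R] [AddCommMonoid N] [PartialOrder N] [IsOrderedAddMonoid N]
  {v : R → N}

theorem apply_mul_pow_le (hv : ∀ x y, v (x * y) ≤ v x + v y) (t x : R) (n : ℕ) :
    v (t * x ^ n) ≤ v t + n • v x := by
  induction n generalizing t with
  | zero => simp
  | succ n ih =>
    calc v (t * x ^ (n + 1)) = v (t * x * x ^ n) := by rw [pow_succ', mul_assoc]
      _ ≤ v (t * x) + n • v x := ih _
      _ ≤ v t + v x + n • v x := by gcongr; exact hv t x
      _ = v t + (n + 1) • v x := by rw [add_assoc, succ_nsmul']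

theorem apply_mul_prod_pow_le {ι : Type*} (hv : ∀ x y, v (x * y) ≤ v x + v y) (s : Finset ι)
    (t : R) (x : ι → R) (e : ι → ℕ) :
    v (t * ∏ i ∈ s, x i ^ e i) ≤ v t + ∑ i ∈ s, e i • v (x i) := by
  classical
  induction s using Finset.induction_on generalizing t with
  | empty => simp
  | insert a s ha ih =>
    calc v (t * ∏ i ∈ insert a s, x i ^ e i) = v (t * x a ^ e a * ∏ i ∈ s, x i ^ e i) := by
          rw [prod_insert ha, mul_assoc]
      _ ≤ v (t * x a ^ e a) + ∑ i ∈ s, e i • v (x i) := ih _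
      _ ≤ v t + e a • v (x a) + ∑ i ∈ s, e i • v (x i) := by
          gcongr; exact apply_mul_pow_le hv t (x a) (e a)
      _ = v t + ∑ i ∈ insert a s, e i • v (x i) := by rw [sum_insert ha, add_assoc]

end WeightInequalities

namespace WithBot

theorem map_intCast_le_map_intCast {u v : WithBot ℤ} :
    u.map ((↑) : ℤ → ℝ) ≤ v.map (↑) ↔ u ≤ v :=
  map_le_iff _ Int.cast_le

theorem map_intCast_add (u v : WithBot ℤ) :
    (u + v).map ((↑) : ℤ → ℝ) = u.map (↑) + v.map (↑) :=
  WithBot.map_add (Int.castAddHom ℝ) u v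

end WithBot

section Weight

variable {R : Type*} (w : R → WithBot ℤ)

theorem weightR_zero [Zero R] (hw0 : w 0 = ⊥) : weightR w 0 = ⊥ := by
  simp [weightR, hw0]

theorem weightR_add_le [Add R] (hwadd : ∀ x y : R, w (x + y) ≤ max (w x) (w y)) (x y : R) :
    weightR w (x + y) ≤ max (weightR w x) (weightR w y) := by
  rw [weightR, weightR, weightR, ← (Int.cast_mono.withBot_map).map_max]
  exact WithBot.map_intCast_le_map_intCast.2 (hwadd x y)

theorem weightR_mul_le [Mul R] (hwmul : ∀ x y : R, w (x * y) ≤ w x + w y) (x y : R) :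
    weightR w (x * y) ≤ weightR w x + weightR w y := by
  rw [weightR, weightR, weightR, ← WithBot.map_intCast_add]
  exact WithBot.map_intCast_le_map_intCast.2 (hwmul x y)

theorem weightR_le_ceil_sub_one_of_lt {x : R} {c : ℝ} (h : weightR w x < c) :
    weightR w x ≤ ((⌈c⌉ - 1 : ℤ) : ℝ) := by
  unfold weightR at h ⊢
  cases hx : w x with
  | bot => simp
  | coe z =>
    simp only [hx, WithBot.map_coe, WithBot.coe_lt_coe, WithBot.coe_le_coe] at h ⊢
    have : z < ⌈c⌉ := Int.lt_ceil.2 h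
    exact_mod_cast (by omega : z ≤ ⌈c⌉ - 1)

theorem weightR_mul_prod_pow_le [CommMonoid R] (hwmul : ∀ x y : R, w (x * y) ≤ w x + w y)
    {ι : Type*} (s : Finset ι) {t : R} {x : ι → R} (e : ι → ℕ) {c d : ℝ}
    (ht : weightR w t ≤ c) (hx : ∀ i ∈ s, weightR w (x i) ≤ d) :
    weightR w (t * ∏ i ∈ s, x i ^ e i) ≤ ((c + ((∑ i ∈ s, e i : ℕ) : ℝ) * d : ℝ) : WithBot ℝ) :=
  calc weightR w (t * ∏ i ∈ s, x i ^ e i)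
      ≤ weightR w t + ∑ i ∈ s, e i • weightR w (x i) :=
        apply_mul_prod_pow_le (weightR_mul_le w hwmul) s t x e
    _ ≤ c + ∑ i ∈ s, e i • (d : WithBot ℝ) := by
        gcongr with i hi
        exact hx i hi
    _ = ((c + ((∑ i ∈ s, e i : ℕ) : ℝ) * d : ℝ) : WithBot ℝ) := by
        rw [← sum_smul, ← WithBot.coe_nsmul, ← WithBot.coe_add, nsmul_eq_mul]

end Weight

section Pairing

variable {r : ℕ} {ρ : Fin r → ℕ}

theorem pairing_eq_dotProduct (m : Fin r → ℕ) : pairing ρ m = ρ ⬝ᵥ m := rfl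

theorem pairing_pos (hρ : ∀ α, 1 ≤ ρ α) {i : Fin r → ℕ} (hi : i ≠ 0) : 0 < pairing ρ i := by
  obtain ⟨α, hα⟩ := Function.ne_iff.mp hi
  exact sum_pos' (fun _ _ => Nat.zero_le _)
    ⟨α, mem_univ α, Nat.mul_pos (hρ α) (Nat.pos_of_ne_zero hα)⟩

theorem IsPartitionOf.pairing_eq {π : (Fin r → ℕ) →₀ ℕ} {m : Fin r → ℕ}
    (hπ : IsPartitionOf π m) (ρ : Fin r → ℕ) :
    pairing ρ m = π.sum fun i n => n * pairing ρ i := by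
  simp only [pairing_eq_dotProduct, ← hπ.2, Finsupp.sum, dotProduct_sum, dotProduct_smul,
    smul_eq_mul]

theorem IsPartitionOf.sum_le {π : (Fin r → ℕ) →₀ ℕ} {m : Fin r → ℕ} (hπ : IsPartitionOf π m)
    {wi : (Fin r → ℕ) → ℝ} {w₀ C : ℝ} (h : ∀ i, i ≠ 0 → wi i + w₀ / 2 ≤ pairing ρ i * C) :
    (π.sum fun i n => (n : ℝ) * wi i) + 1 / 2 * (π.sum fun _ n => (n : ℝ)) * w₀ ≤
      C * pairing ρ m := by
  simp only [hπ.pairing_eq ρ, Finsupp.sum, Nat.cast_sum, mul_sum, sum_mul, ← sum_add_distrib]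
  refine sum_le_sum fun i hi => ?_
  have hi0 : i ≠ 0 := by
    rintro rfl
    exact Finsupp.mem_support_iff.mp hi hπ.1
  push_cast
  linarith [mul_le_mul_of_nonneg_left (h i hi0) (Nat.cast_nonneg (π i) : (0 : ℝ) ≤ π i)]

end Pairing

theorem add_half_le_mul_of_regimes {M p : ℕ} {w₀ ε a β δ x : ℝ} (hw₀ : 0 ≤ w₀) (hβ : 0 ≤ β)
    (hδ : 0 ≤ δ) (hδε : δ * (M + 1) ≤ ε) (hδa : δ ≤ 1 - a)
    (h₁ : p ≤ M → x ≤ ((p : ℝ) - 1 / 2 - ε) * w₀)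
    (h₂ : M < p → x ≤ (a * (p : ℝ) + β - 1 / 2) * w₀) :
    x + w₀ / 2 ≤ p * (w₀ * (1 - δ + β / (M + 1))) := by
  have hβM : 0 ≤ (p : ℝ) * (β / (M + 1)) * w₀ := by positivity
  rcases le_or_gt p M with hpM | hpM
  · have hpM' : (p : ℝ) ≤ M := by exact_mod_cast hpM
    have hpδ : (p : ℝ) * δ ≤ ε := by nlinarith
    linarith [h₁ hpM, mul_nonneg (sub_nonneg.2 hpδ) hw₀]
  · have hpM' : (M : ℝ) + 1 ≤ p := by exact_mod_cast hpM
    have hβp : β ≤ p * (β / (M + 1)) := by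
      rw [mul_div_assoc', le_div_iff₀ (by positivity)]
      nlinarith
    linarith [h₂ hpM, mul_nonneg (sub_nonneg.2 hβp) hw₀,
      mul_nonneg (mul_nonneg (sub_nonneg.2 hδa) (Nat.cast_nonneg p)) hw₀]

theorem euler_product_weight_linear_convergence_criterion_general
    {R : Type*} [CommRing R] (w : R → WithBot ℤ)
    (hw0 : w 0 = ⊥)
    (hwadd : ∀ x y : R, w (x + y) ≤ max (w x) (w y))
    (hwmul : ∀ x y : R, w (x * y) ≤ w x + w y)
    (r : ℕ) (ρ : Fin r → ℕ) (hρ : ∀ α, 1 ≤ ρ α)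
    (M : ℕ) (w₀ ε a β : ℝ)
    (hw₀ : 0 ≤ w₀) (hε : 0 < ε) (ha : a < 1) (hβ : 0 ≤ β)
    (wi : (Fin r → ℕ) → ℝ)
    (hwi₁ : ∀ i : Fin r → ℕ, i ≠ 0 → 1 ≤ pairing ρ i → pairing ρ i ≤ M →
      wi i ≤ ((pairing ρ i : ℝ) - 1 / 2 - ε) * w₀)
    (hwi₂ : ∀ i : Fin r → ℕ, i ≠ 0 → M < pairing ρ i →
      wi i ≤ (a * (pairing ρ i : ℝ) + β - 1 / 2) * w₀)
    (b : (Fin r → ℕ) → R)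
    (hb : ∀ m : Fin r → ℕ, m ≠ 0 →
      ∃ (P : Finset ((Fin r → ℕ) →₀ ℕ)) (s : ((Fin r → ℕ) →₀ ℕ) → R),
        (∀ π ∈ P, IsPartitionOf π m) ∧
        b m = ∑ π ∈ P, s π ∧
        ∀ π ∈ P, weightR w (s π) ≤
          (((π.sum fun i n => (n : ℝ) * wi i)
            + 1 / 2 * (π.sum fun _ n => (n : ℝ)) * w₀ : ℝ) : WithBot ℝ)) :
    ∃ δ δ' : ℝ, 0 < δ ∧ δ ≤ 1 / 2 ∧ 0 < δ' ∧
      ∀ m : Fin r → ℕ, m ≠ 0 → ∀ A : Fin r → R,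
        (∀ k, weightR w (A k) <
          ((-(w₀ * (1 - δ + β / (M + 1))) : ℝ) : WithBot ℝ)) →
        weightR w (b m * ∏ k, A k ^ (ρ k * m k)) ≤
          ((-(δ' * (pairing ρ m : ℝ)) : ℝ) : WithBot ℝ) := by
  obtain ⟨δ, hδ, hδ_half, hδε, hδa⟩ :
      ∃ δ : ℝ, 0 < δ ∧ δ ≤ 1 / 2 ∧ δ * (M + 1) ≤ ε ∧ δ ≤ 1 - a := by
    refine ⟨min (1 / 2) (min (ε / (M + 1)) (1 - a)),
      lt_min (by norm_num) (lt_min (by positivity) (by linarith)), min_le_left _ _, ?_,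
      (min_le_right _ _).trans (min_le_right _ _)⟩
    rw [← le_div_iff₀ (by positivity)]
    exact (min_le_right _ _).trans (min_le_left _ _)
  set C := w₀ * (1 - δ + β / (M + 1))
  set K : ℤ := ⌈-C⌉ - 1
  refine ⟨δ, -C - K, hδ, hδ_half, by push_cast [K]; linarith [Int.ceil_lt_add_one (-C)], ?_⟩
  intro m hm A hA
  obtain ⟨P, s, hP, hbm, hs⟩ := hb m hm
  have hpart : ∀ i, i ≠ 0 → wi i + w₀ / 2 ≤ pairing ρ i * C := fun i hi =>
    add_half_le_mul_of_regimes hw₀ hβ hδ.le hδε hδa (hwi₁ i hi (pairing_pos hρ hi)) (hwi₂ i hi)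
  rw [hbm, sum_mul]
  refine apply_sum_le (weightR_zero w hw0) (weightR_add_le w hwadd) fun π hπ => ?_
  calc weightR w (s π * ∏ k, A k ^ (ρ k * m k))
      ≤ ((C * pairing ρ m + (pairing ρ m : ℝ) * K : ℝ) : WithBot ℝ) :=
        weightR_mul_prod_pow_le w hwmul univ _
          ((hs π hπ).trans (WithBot.coe_le_coe.2 ((hP π hπ).sum_le hpart)))
          fun k _ => weightR_le_ceil_sub_one_of_lt w (hA k)
    _ = ((-((-C - K) * (pairing ρ m : ℝ)) : ℝ) : WithBot ℝ) := by ring_nf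

theorem euler_product_weight_linear_convergence_criterion
    {R : Type*} [CommRing R] (w : R → WithBot ℤ)
    (hw0 : w 0 = ⊥)
    (hwadd : ∀ x y : R, w (x + y) ≤ max (w x) (w y))
    (hwmul : ∀ x y : R, w (x * y) ≤ w x + w y)
    (r : ℕ) (hr : 1 ≤ r) (ρ : Fin r → ℕ) (hρ : ∀ α, 1 ≤ ρ α)
    (M : ℕ) (w₀ ε a β : ℝ)
    (hw₀ : 0 ≤ w₀) (hε : 0 < ε) (ha : a < 1) (hβ : 0 ≤ β)
    (wi : (Fin r → ℕ) → ℝ)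
    (hwi₁ : ∀ i : Fin r → ℕ, i ≠ 0 → 1 ≤ pairing ρ i → pairing ρ i ≤ M →
      wi i ≤ ((pairing ρ i : ℝ) - 1 / 2 - ε) * w₀)
    (hwi₂ : ∀ i : Fin r → ℕ, i ≠ 0 → M < pairing ρ i →
      wi i ≤ (a * (pairing ρ i : ℝ) + β - 1 / 2) * w₀)
    (b : (Fin r → ℕ) → R)
    (hb : ∀ m : Fin r → ℕ, m ≠ 0 →
      ∃ (P : Finset ((Fin r → ℕ) →₀ ℕ)) (s : ((Fin r → ℕ) →₀ ℕ) → R),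
        (∀ π ∈ P, IsPartitionOf π m) ∧
        b m = ∑ π ∈ P, s π ∧
        ∀ π ∈ P, weightR w (s π) ≤
          (((π.sum fun i n => (n : ℝ) * wi i)
            + 1 / 2 * (π.sum fun _ n => (n : ℝ)) * w₀ : ℝ) : WithBot ℝ)) :
    ∃ δ δ' : ℝ, 0 < δ ∧ δ ≤ 1 / 2 ∧ 0 < δ' ∧
      ∀ m : Fin r → ℕ, m ≠ 0 → ∀ A : Fin r → R,
        (∀ k, weightR w (A k) <
          ((-(w₀ * (1 - δ + β / (M + 1))) : ℝ) : WithBot ℝ)) →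
        weightR w (b m * ∏ k, A k ^ (ρ k * m k)) ≤
          ((-(δ' * (pairing ρ m : ℝ)) : ℝ) : WithBot ℝ) :=
  euler_product_weight_linear_convergence_criterion_general w hw0 hwadd hwmul r ρ hρ M w₀ ε a β hw₀
    hε ha hβ wi hwi₁ hwi₂ b hb
end

section
/- Negligible convolution products, first part (Lemma "negligible-terms" of the paper, part (i), in normalized form): Fix an integer r ≥ 1 and ε ∈ {0,1}^r ∖ {0}. Let (c_m)_{m∈ℕ^r} be a family in R whose weights tend to −∞ in the directed sense: for every A ∈ ℤ there exists m₀ ∈ ℕ^r such that w(c_{m'}) < A for every m' ∈ ℕ^r with m' ≰ m₀. Let ℓ ∈ R be an element with w(ℓ) ≤ −1. Then for every A ∈ ℤ there exists N ∈ ℕ such that for every m ∈ ℕ^r with min_{1≤α≤r} m_α ≥ N one has w( Σ_{m' ≤ m} c_{m'}·ℓ^{⟨ε, m−m'⟩} ) < A; that is, the sums Σ_{m' ≤ m} c_{m'}·ℓ^{⟨ε, m−m'⟩} tend to zero in the weight topology as min_α m_α → ∞. -/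
/-!
Split the sum at a box `m' ≤ m₀` outside of which `w (c m') < A`. Outside the box the factor
`ℓ ^ ⟨ε, m - m'⟩` can only lower the weight. Inside the box the weights of the `c m'` are bounded
by a fixed integer `b`, while `⟨ε, m - m'⟩ ≥ m α - m₀ α` for any `α` with `ε α ≠ 0`, so the factor
`ℓ ^ ⟨ε, m - m'⟩` pushes the weight below `A` once `min m ≥ m₀ α + (b - A + 1)`. The ultrametric
inequality then bounds the whole sum.
-/

open Finset

lemma weightR_lt_intCast_iff {R : Type*} (w : R → WithBot ℤ) (x : R) (A : ℤ) :
    weightR w x < ((A : ℝ) : WithBot ℝ) ↔ w x < A :=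
  (Int.cast_strictMono (R := ℝ)).withBot_map.lt_iff_lt (a := w x) (b := A)

lemma weightR_le_intCast_iff {R : Type*} (w : R → WithBot ℤ) (x : R) (A : ℤ) :
    weightR w x ≤ ((A : ℝ) : WithBot ℝ) ↔ w x ≤ A :=
  (Int.cast_strictMono (R := ℝ)).withBot_map.le_iff_le (a := w x) (b := A)

lemma le_pairing_of_ne_zero {r : ℕ} {ε : Fin r → ℕ} {α : Fin r} (hα : ε α ≠ 0)
    (m : Fin r → ℕ) : m α ≤ pairing ε m :=
  calc m α ≤ ε α * m α := Nat.le_mul_of_pos_left _ (Nat.pos_of_ne_zero hα)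
    _ ≤ pairing ε m := single_le_sum (f := fun β => ε β * m β) (fun _ _ => Nat.zero_le _)
        (mem_univ α)

lemma exists_forall_le_intCast {ι : Type*} (s : Finset ι) (f : ι → WithBot ℤ) :
    ∃ b : ℤ, ∀ i ∈ s, f i ≤ b :=
  ⟨(s.sup f).unbotD 0, fun _ hi => (le_sup hi).trans (WithBot.le_coe_unbotD _ _)⟩

lemma weight_sum_lt_of_forall_lt {R α : Type*} [AddCommMonoid R] [LinearOrder α] {w : R → α}
    (hwadd : ∀ x y : R, w (x + y) ≤ max (w x) (w y)) {ι : Type*} {s : Finset ι}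
    (hs : s.Nonempty) {f : ι → R} {A : α} (hf : ∀ i ∈ s, w (f i) < A) :
    w (∑ i ∈ s, f i) < A := by
  induction hs using Finset.Nonempty.cons_induction with
  | singleton i => simpa using hf i (mem_singleton_self i)
  | cons i s hi _ ih =>
    rw [forall_mem_cons] at hf
    rw [sum_cons]
    exact (hwadd _ _).trans_lt (max_lt hf.1 (ih hf.2))

lemma weight_mul_pow_le {R : Type*} [Monoid R] {w : R → WithBot ℤ}
    (hwmul : ∀ x y : R, w (x * y) ≤ w x + w y) {ℓ : R} (hℓ : w ℓ ≤ (-1 : ℤ)) (x : R) (k : ℕ) :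
    w (x * ℓ ^ k) ≤ w x + (-k : ℤ) := by
  induction k with
  | zero => simp
  | succ k ih =>
    calc w (x * ℓ ^ (k + 1)) ≤ w (x * ℓ ^ k) + w ℓ := by rw [pow_succ, ← mul_assoc]; exact hwmul _ _
      _ ≤ w x + (-k : ℤ) + (-1 : ℤ) := add_le_add ih hℓ
      _ = w x + (-(k + 1 : ℕ) : ℤ) := by
          rw [add_assoc, ← WithBot.coe_add]; congr 2; push_cast; ring

theorem negligible_convolution_products_tendsto_zero_general
    {R : Type*} [CommRing R] (w : R → WithBot ℤ)
    (hwadd : ∀ x y : R, w (x + y) ≤ max (w x) (w y))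
    (hwmul : ∀ x y : R, w (x * y) ≤ w x + w y)
    (r : ℕ) (ε : Fin r → ℕ) (hε0 : ε ≠ 0)
    (c : (Fin r → ℕ) → R)
    (hc : ∀ A : ℤ, ∃ m₀ : Fin r → ℕ, ∀ m' : Fin r → ℕ, ¬ m' ≤ m₀ →
      weightR w (c m') < ((A : ℝ) : WithBot ℝ))
    (ℓ : R) (hℓ : weightR w ℓ ≤ ((-1 : ℝ) : WithBot ℝ)) :
    ∀ A : ℤ, ∃ N : ℕ, ∀ m : Fin r → ℕ, (∀ α, N ≤ m α) →
      weightR w (∑ m' ∈ Finset.Iic m, c m' * ℓ ^ pairing ε (m - m')) <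
        ((A : ℝ) : WithBot ℝ) := by
  have hℓ' : w ℓ ≤ (-1 : ℤ) := (weightR_le_intCast_iff w ℓ (-1)).1 (mod_cast hℓ)
  obtain ⟨α, hα⟩ := Function.ne_iff.1 hε0
  intro A
  obtain ⟨m₀, hm₀⟩ := hc A
  obtain ⟨b, hb⟩ := exists_forall_le_intCast (Iic m₀) (fun m' => w (c m'))
  refine ⟨m₀ α + (b - A + 1).toNat, fun m hm => ?_⟩
  rw [weightR_lt_intCast_iff]
  refine weight_sum_lt_of_forall_lt hwadd ⟨m, mem_Iic.2 le_rfl⟩ fun m' _ => ?_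
  refine (weight_mul_pow_le hwmul hℓ' _ _).trans_lt ?_
  by_cases hbox : m' ≤ m₀
  · have hpairing : m α - m' α ≤ pairing ε (m - m') := le_pairing_of_ne_zero hα (m - m')
    have hsmall : b + (-(pairing ε (m - m') : ℤ)) < A := by
      have : m' α ≤ m₀ α := hbox α
      have := hm α
      omega
    exact (add_le_add_left (hb m' (mem_Iic.2 hbox)) _).trans_lt (mod_cast hsmall)
  · have hneg : ((-pairing ε (m - m') : ℤ) : WithBot ℤ) ≤ 0 := mod_cast by omega
    exact (add_le_of_nonpos_right hneg).trans_lt ((weightR_lt_intCast_iff w _ A).1 (hm₀ m' hbox))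

theorem negligible_convolution_products_tendsto_zero
    {R : Type*} [CommRing R] (w : R → WithBot ℤ)
    (hw0 : w 0 = ⊥)
    (hwadd : ∀ x y : R, w (x + y) ≤ max (w x) (w y))
    (hwmul : ∀ x y : R, w (x * y) ≤ w x + w y)
    (r : ℕ) (hr : 1 ≤ r) (ε : Fin r → ℕ) (hε1 : ∀ α, ε α ≤ 1) (hε0 : ε ≠ 0)
    (c : (Fin r → ℕ) → R)
    (hc : ∀ A : ℤ, ∃ m₀ : Fin r → ℕ, ∀ m' : Fin r → ℕ, ¬ m' ≤ m₀ →
      weightR w (c m') < ((A : ℝ) : WithBot ℝ))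
    (ℓ : R) (hℓ : weightR w ℓ ≤ ((-1 : ℝ) : WithBot ℝ)) :
    ∀ A : ℤ, ∃ N : ℕ, ∀ m : Fin r → ℕ, (∀ α, N ≤ m α) →
      weightR w (∑ m' ∈ Finset.Iic m, c m' * ℓ ^ pairing ε (m - m')) <
        ((A : ℝ) : WithBot ℝ) :=
  negligible_convolution_products_tendsto_zero_general w hwadd hwmul r ε hε0 c hc ℓ hℓ
end

section
/- Negligible convolution products, second part (Lemma "negligible-terms" of the paper, part (ii), in normalized form): Fix an integer r ≥ 1, ρ ∈ (ℤ_{≥1})^r and ε ∈ {0,1}^r ∖ {0}. Let (c_m)_{m∈ℕ^r} be a family in R converging ρ-weight-linearly: there exist δ > 0 and i₀ ∈ ℕ such that w(c_m) < −δ·⟨ρ,m⟩ whenever ⟨ρ,m⟩ ≥ i₀. Let ℓ ∈ R be an element with w(ℓ) ≤ −1. Then there exist δ' > 0 (one can take δ' = min(1/2, δ)) and i₁ ∈ ℕ such that for every m ∈ ℕ^r with ⟨ε, m⟩ ≥ i₁ one has w( Σ_{m' ≤ m} c_{m'}·ℓ^{⟨ε, m−m'⟩} ) < −δ'·⟨ε,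 m⟩. -/
open Finset

section Helpers

lemma castMap_mono {a b : WithBot ℤ} (h : a ≤ b) :
    a.map (fun n : ℤ => (n : ℝ)) ≤ b.map (fun n : ℤ => (n : ℝ)) := by
  induction a with
  | bot => simp
  | coe a =>
    induction b with
    | bot => simp at h
    | coe b => simp only [WithBot.map_coe, WithBot.coe_le_coe] at h ⊢; exact_mod_cast h

lemma castMap_add (a b : WithBot ℤ) :
    (a + b).map (fun n : ℤ => (n : ℝ)) = a.map (fun n : ℤ => (n : ℝ)) + b.map (fun n : ℤ => (n : ℝ)) := by
  induction a with
  | bot => simp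
  | coe a =>
    induction b with
    | bot => simp
    | coe b => simp [← WithBot.coe_add]

lemma castMap_max (a b : WithBot ℤ) :
    (a ⊔ b).map (fun n : ℤ => (n : ℝ)) = a.map (fun n : ℤ => (n : ℝ)) ⊔ b.map (fun n : ℤ => (n : ℝ)) := by
  induction a with
  | bot => simp
  | coe a =>
    induction b with
    | bot => simp
    | coe b =>
      simp only [WithBot.map_coe, ← WithBot.coe_sup]
      norm_cast

lemma wR_lt_of_le_add {a b : WithBot ℝ} {s t : ℝ}
    (h : a ≤ b + (t : WithBot ℝ)) (hb : b < (s : WithBot ℝ)) :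
    a < ((s + t : ℝ) : WithBot ℝ) := by
  refine h.trans_lt ?_
  induction b with
  | bot =>
    rw [WithBot.bot_add]
    exact WithBot.bot_lt_coe (s + t)
  | coe b =>
    rw [← WithBot.coe_add, WithBot.coe_lt_coe]
    have hb' := WithBot.coe_lt_coe.mp hb
    linarith

lemma wR_mul_pow {R : Type*} [CommRing R] (w : R → WithBot ℤ)
    (hwmul : ∀ x y : R, w (x * y) ≤ w x + w y)
    (ℓ : R) (hℓ : weightR w ℓ ≤ ((-1 : ℝ) : WithBot ℝ)) (x : R) :
    ∀ k : ℕ, weightR w (x * ℓ ^ k) ≤ weightR w x + ((-(k : ℝ) : ℝ) : WithBot ℝ) := by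
  intro k
  induction k with
  | zero => simp [weightR]
  | succ k ih =>
    have h1 : weightR w (x * ℓ ^ (k + 1)) ≤ weightR w (x * ℓ ^ k) + weightR w ℓ := by
      have := hwmul (x * ℓ ^ k) ℓ
      have := castMap_mono this
      rw [castMap_add] at this
      simpa [weightR, pow_succ, mul_assoc] using this
    refine h1.trans ?_
    calc weightR w (x * ℓ ^ k) + weightR w ℓ
        ≤ (weightR w x + ((-(k : ℝ) : ℝ) : WithBot ℝ)) + ((-1 : ℝ) : WithBot ℝ) :=
          add_le_add ih hℓ
      _ = weightR w x + ((-((k + 1 : ℕ) : ℝ) : ℝ) : WithBot ℝ) := by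
          rw [add_assoc]
          congr 1
          rw [← WithBot.coe_add]
          congr 1
          push_cast
          ring
  
lemma wR_sum_lt {R : Type*} [CommRing R] (w : R → WithBot ℤ)
    (hw0 : w 0 = ⊥)
    (hwadd : ∀ x y : R, w (x + y) ≤ max (w x) (w y))
    {ι : Type*} (s : Finset ι) (f : ι → R) (t : ℝ)
    (h : ∀ i ∈ s, weightR w (f i) < (t : WithBot ℝ)) :
    weightR w (∑ i ∈ s, f i) < (t : WithBot ℝ) := by
  induction s using Finset.cons_induction with
  | empty => simp [weightR, hw0]
  | cons a s ha ih =>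
    rw [Finset.sum_cons]
    have h1 : weightR w (f a + ∑ i ∈ s, f i)
        ≤ weightR w (f a) ⊔ weightR w (∑ i ∈ s, f i) := by
      have := castMap_mono (hwadd (f a) (∑ i ∈ s, f i))
      rw [castMap_max] at this
      exact this
    refine h1.trans_lt (max_lt (h a (Finset.mem_cons_self a s)) (ih fun i hi => h i (Finset.mem_cons_of_mem hi)))

lemma pairing_add_sub {r : ℕ} (ε m m' : Fin r → ℕ) (h : m' ≤ m) :
    pairing ε m' + pairing ε (m - m') = pairing ε m := by
  unfold pairing
  rw [← Finset.sum_add_distrib]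
  refine Finset.sum_congr rfl fun α _ => ?_
  have : m' α + (m α - m' α) = m α := Nat.add_sub_cancel' (h α)
  simp only [Pi.sub_apply]
  rw [← Nat.mul_add, this]

end Helpers

theorem negligible_convolution_products_weight_linear
    {R : Type*} [CommRing R] (w : R → WithBot ℤ)
    (hw0 : w 0 = ⊥)
    (hwadd : ∀ x y : R, w (x + y) ≤ max (w x) (w y))
    (hwmul : ∀ x y : R, w (x * y) ≤ w x + w y)
    (r : ℕ) (hr : 1 ≤ r)
    (ρ : Fin r → ℕ) (hρ : ∀ α, 1 ≤ ρ α)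
    (ε : Fin r → ℕ) (hε1 : ∀ α, ε α ≤ 1) (hε0 : ε ≠ 0)
    (c : (Fin r → ℕ) → R)
    (δ : ℝ) (hδ : 0 < δ) (i₀ : ℕ)
    (hc : ∀ m : Fin r → ℕ, i₀ ≤ pairing ρ m →
      weightR w (c m) < ((-(δ * (pairing ρ m : ℝ)) : ℝ) : WithBot ℝ))
    (ℓ : R) (hℓ : weightR w ℓ ≤ ((-1 : ℝ) : WithBot ℝ)) :
    ∃ δ' : ℝ, 0 < δ' ∧ ∃ i₁ : ℕ, ∀ m : Fin r → ℕ, i₁ ≤ pairing ε m →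
      weightR w (∑ m' ∈ Finset.Iic m, c m' * ℓ ^ pairing ε (m - m')) <
        ((-(δ' * (pairing ε m : ℝ)) : ℝ) : WithBot ℝ) := by
  -- pairing ε ≤ pairing ρ
  have hεle : ∀ m : Fin r → ℕ, pairing ε m ≤ pairing ρ m := by
    intro m
    exact Finset.sum_le_sum fun α _ => Nat.mul_le_mul_right _ ((hε1 α).trans (hρ α))
  -- the constant C bounding weights of c m' for small m'
  set box : Finset (Fin r → ℕ) := Finset.Iic (fun _ => i₀) with hbox
  set B : WithBot ℤ := box.sup (fun m' => w (c m')) ⊔ (0 : WithBot ℤ) with hB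
  have hBne : B ≠ ⊥ := by
    intro h
    rw [hB] at h
    simp only [sup_eq_bot_iff] at h
    exact (by simp : ((0 : ℤ) : WithBot ℤ) ≠ ⊥) h.2
  obtain ⟨C, hC⟩ : ∃ C : ℤ, B = (C : WithBot ℤ) := by
    cases hB' : B with
    | bot => exact absurd hB' hBne
    | coe C => exact ⟨C, rfl⟩
  have hCbd : ∀ m' : Fin r → ℕ, pairing ρ m' ≤ i₀ → w (c m') ≤ (C : WithBot ℤ) := by
    intro m' hm'
    have hmem : m' ∈ box := by
      rw [hbox, Finset.mem_Iic]
      intro α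
      calc m' α ≤ ρ α * m' α := Nat.le_mul_of_pos_left _ (hρ α)
        _ ≤ pairing ρ m' := Finset.single_le_sum (f := fun α => ρ α * m' α) (fun _ _ => Nat.zero_le _) (Finset.mem_univ α)
        _ ≤ i₀ := hm'
    calc w (c m') ≤ box.sup (fun m' => w (c m')) := Finset.le_sup (f := fun m' => w (c m')) hmem
      _ ≤ B := le_sup_left
      _ = (C : WithBot ℤ) := hC
  -- δ'
  refine ⟨min (1/2) δ, lt_min (by norm_num) hδ, ?_⟩
  set δ' := min (1/2) δ with hδ'def
  have hδ'pos : 0 < δ' := lt_min (by norm_num) hδ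
  have hδ'le : δ' ≤ δ := min_le_right _ _
  have hδ'half : δ' ≤ 1/2 := min_le_left _ _
  -- i₁
  obtain ⟨i₁, hi₁⟩ := exists_nat_gt (2 * ((C : ℝ) + (i₀ : ℝ)))
  refine ⟨i₁, fun m hm => ?_⟩
  set E : ℝ := (pairing ε m : ℝ) with hE
  have hEi₁ : (i₁ : ℝ) ≤ E := by rw [hE]; exact_mod_cast hm
  apply wR_sum_lt w hw0 hwadd
  intro m' hm'
  rw [Finset.mem_Iic] at hm'
  set k : ℕ := pairing ε (m - m') with hk
  set E' : ℝ := (pairing ε m' : ℝ) with hE'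
  have hsplit : E' + (k : ℝ) = E := by
    rw [hE', hE, hk]
    exact_mod_cast congrArg (fun n : ℕ => (n : ℝ)) (pairing_add_sub ε m m' hm')
  have hE'0 : 0 ≤ E' := by positivity
  have hk0 : (0:ℝ) ≤ (k : ℝ) := by positivity
  have hterm := wR_mul_pow w hwmul ℓ hℓ (c m') k
  by_cases hcase : i₀ ≤ pairing ρ m'
  · -- large case
    have hlt := hc m' hcase
    have h1 : weightR w (c m' * ℓ ^ k) <
        ((-(δ * (pairing ρ m' : ℝ)) + (-(k : ℝ)) : ℝ) : WithBot ℝ) :=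
      wR_lt_of_le_add hterm hlt
    refine h1.trans_le ?_
    rw [WithBot.coe_le_coe]
    have hE'P : E' ≤ (pairing ρ m' : ℝ) := by rw [hE']; exact_mod_cast hεle m'
    have hP0 : (0:ℝ) ≤ (pairing ρ m' : ℝ) := by positivity
    nlinarith [hδ'pos.le, hδ'le, hδ'half]
  · -- small case
    push_neg at hcase
    have hwc : weightR w (c m') ≤ ((C : ℝ) : WithBot ℝ) := by
      have := castMap_mono (hCbd m' hcase.le)
      simpa [weightR] using this
    have h1 : weightR w (c m' * ℓ ^ k) ≤ (((C : ℝ) + (-(k : ℝ)) : ℝ) : WithBot ℝ) := by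
      refine hterm.trans ?_
      rw [WithBot.coe_add]
      exact add_le_add hwc le_rfl
    refine h1.trans_lt ?_
    rw [WithBot.coe_lt_coe]
    have hE'i₀ : E' ≤ (i₀ : ℝ) := by
      have h2 := (hεle m').trans hcase.le
      rw [hE']; exact_mod_cast h2
    nlinarith [hδ'pos.le, hδ'half]
end

section
/- Key partition inequality in the proof of the convergence criterion for motivic Euler products: Fix an integer r ≥ 1, ρ ∈ (ℤ_{≥1})^r, a natural number M, and real numbers w₀ ≥ 0, ε > 0, α < 1 and β ≥ 0. Let (w_i)_{i ∈ ℕ^r∖{0}} be real numbers such that w_i ≤ (⟨ρ,i⟩ − 1/2 − ε)·w₀ whenever 1 ≤ ⟨ρ,i⟩ ≤ M, and w_i ≤ (α·⟨ρ,i⟩ + β − 1/2)·w₀ whenever ⟨ρ,i⟩ > M. Set δ = min(1/2, 1 − α) if M = 0 and δ = min(1/2, ε/M, 1 − α) if M ≥ 1, so that δ ∈ (0, 1/2]. Then for every m ∈ ℕ^r∖{0} and every partition π of m one has Σ_i π(i)·w_i + (1/2)·(Σ_i π(i))·w₀ ≤ (1 − δ + β/(M+1))·⟨ρ, m⟩·w₀.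 -/
open Finset

lemma pairing_sum {r : ℕ} (ρ : Fin r → ℕ) (π : (Fin r → ℕ) →₀ ℕ) :
    pairing ρ (π.sum fun i n => n • i) = ∑ i ∈ π.support, π i * pairing ρ i := by
  unfold pairing Finsupp.sum
  simp only [Finset.sum_apply, Pi.smul_apply, smul_eq_mul, Finset.mul_sum]
  rw [Finset.sum_comm]
  refine Finset.sum_congr rfl fun i _ => Finset.sum_congr rfl fun α _ => by ring

lemma one_le_pairing {r : ℕ} (ρ : Fin r → ℕ) (hρ : ∀ α, 1 ≤ ρ α)
    (i : Fin r → ℕ) (hi : i ≠ 0) : 1 ≤ pairing ρ i := by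
  obtain ⟨α, hα⟩ : ∃ α, i α ≠ 0 := by
    by_contra h
    push_neg at h
    exact hi (funext h)
  have h1 : 1 ≤ ρ α * i α :=
    Nat.one_le_iff_ne_zero.mpr (Nat.mul_ne_zero (Nat.one_le_iff_ne_zero.mp (hρ α)) hα)
  calc 1 ≤ ρ α * i α := h1
    _ ≤ ∑ x, ρ x * i x :=
      Finset.single_le_sum (f := fun x => ρ x * i x) (fun _ _ => Nat.zero_le _) (mem_univ α)
    _ = pairing ρ i := rfl

theorem partition_weight_inequality
    (r : ℕ) (hr : 1 ≤ r) (ρ : Fin r → ℕ) (hρ : ∀ α, 1 ≤ ρ α)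
    (M : ℕ) (w₀ ε a β : ℝ)
    (hw₀ : 0 ≤ w₀) (hε : 0 < ε) (ha : a < 1) (hβ : 0 ≤ β)
    (wi : (Fin r → ℕ) → ℝ)
    (hwi₁ : ∀ i : Fin r → ℕ, i ≠ 0 → 1 ≤ pairing ρ i → pairing ρ i ≤ M →
      wi i ≤ ((pairing ρ i : ℝ) - 1 / 2 - ε) * w₀)
    (hwi₂ : ∀ i : Fin r → ℕ, i ≠ 0 → M < pairing ρ i →
      wi i ≤ (a * (pairing ρ i : ℝ) + β - 1 / 2) * w₀)
    (δ : ℝ)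
    (hδ : δ = if M = 0 then min (1 / 2) (1 - a)
      else min (1 / 2) (min (ε / M) (1 - a))) :
    (0 < δ ∧ δ ≤ 1 / 2) ∧
    ∀ m : Fin r → ℕ, m ≠ 0 → ∀ π : (Fin r → ℕ) →₀ ℕ, IsPartitionOf π m →
      (π.sum fun i n => (n : ℝ) * wi i)
          + 1 / 2 * (π.sum fun _ n => (n : ℝ)) * w₀ ≤
        (1 - δ + β / (M + 1)) * (pairing ρ m : ℝ) * w₀ := by
  have hδpos : 0 < δ := by
    rw [hδ]
    split_ifs with hM
    · exact lt_min (by norm_num) (by linarith)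
    · have hM0 : (0:ℝ) < M := by
        exact_mod_cast Nat.pos_of_ne_zero hM
      exact lt_min (by norm_num) (lt_min (by positivity) (by linarith))
  have hδhalf : δ ≤ 1 / 2 := by
    rw [hδ]; split_ifs <;> exact min_le_left _ _
  have hδa : δ ≤ 1 - a := by
    rw [hδ]; split_ifs
    · exact min_le_right _ _
    · exact le_trans (min_le_right _ _) (min_le_right _ _)
  refine ⟨⟨hδpos, hδhalf⟩, ?_⟩
  -- key pointwise inequality
  have key : ∀ i : Fin r → ℕ, i ≠ 0 →
      wi i + 1 / 2 * w₀ ≤ (1 - δ + β / (M + 1)) * (pairing ρ i : ℝ) * w₀ := by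
    intro i hi
    have hp1 : 1 ≤ pairing ρ i := one_le_pairing ρ hρ i hi
    have hp1' : (1:ℝ) ≤ (pairing ρ i : ℝ) := by exact_mod_cast hp1
    set p : ℝ := (pairing ρ i : ℝ) with hpdef
    have hMpos : (0:ℝ) < M + 1 := by positivity
    rcases le_or_gt (pairing ρ i) M with h | h
    · -- small case; M ≠ 0
      have hM : M ≠ 0 := by omega
      have hδε : δ ≤ ε / M := by
        rw [hδ, if_neg hM]
        exact le_trans (min_le_right _ _) (min_le_left _ _)
      have hpM : p ≤ (M : ℝ) := by rw [hpdef]; exact_mod_cast h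
      have hδp : δ * p ≤ ε := by
        have hM0 : (0:ℝ) < M := by exact_mod_cast Nat.pos_of_ne_zero hM
        have : δ * M ≤ ε := by
          calc δ * M ≤ (ε / M) * M := by nlinarith
            _ = ε := by field_simp
        nlinarith
      have h1 := hwi₁ i hi hp1 h
      have hβp : 0 ≤ β / (M + 1) * p * w₀ := by positivity
      calc wi i + 1 / 2 * w₀ ≤ (p - 1 / 2 - ε) * w₀ + 1 / 2 * w₀ := by linarith
        _ = (p - ε) * w₀ := by ring
        _ ≤ (1 - δ) * p * w₀ + β / (M + 1) * p * w₀ := by nlinarith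
        _ = (1 - δ + β / (M + 1)) * p * w₀ := by ring
    · -- big case
      have h2 := hwi₂ i hi h
      have hpM : (M : ℝ) + 1 ≤ p := by
        have : M + 1 ≤ pairing ρ i := h
        rw [hpdef]; exact_mod_cast this
      have hβ' : β * (M + 1) ≤ β * p := by nlinarith
      have hβ'' : β ≤ β / (M + 1) * p := by
        rw [div_mul_eq_mul_div, le_div_iff₀ hMpos]
        linarith
      have hap : a * p ≤ (1 - δ) * p := by nlinarith
      calc wi i + 1 / 2 * w₀ ≤ (a * p + β - 1 / 2) * w₀ + 1 / 2 * w₀ := by linarith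
        _ = (a * p + β) * w₀ := by ring
        _ ≤ ((1 - δ) * p + β / (M + 1) * p) * w₀ := by
            apply mul_le_mul_of_nonneg_right _ hw₀
            linarith
        _ = (1 - δ + β / (M + 1)) * p * w₀ := by ring
  intro m hm π hπ
  obtain ⟨hπ0, hπsum⟩ := hπ
  have hsupp : ∀ i ∈ π.support, i ≠ 0 := by
    intro i hi h0
    rw [Finsupp.mem_support_iff] at hi
    exact hi (h0 ▸ hπ0)
  have hpm : (pairing ρ m : ℝ) = ∑ i ∈ π.support, (π i : ℝ) * (pairing ρ i : ℝ) := by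
    rw [← hπsum, pairing_sum]
    push_cast
    rfl
  rw [Finsupp.sum, Finsupp.sum]
  calc (∑ i ∈ π.support, (π i : ℝ) * wi i)
        + 1 / 2 * (∑ i ∈ π.support, (π i : ℝ)) * w₀
      = ∑ i ∈ π.support, (π i : ℝ) * (wi i + 1 / 2 * w₀) := by
        rw [Finset.mul_sum, Finset.sum_mul, ← Finset.sum_add_distrib]
        exact Finset.sum_congr rfl fun i _ => by ring
    _ ≤ ∑ i ∈ π.support, (π i : ℝ) * ((1 - δ + β / (M + 1)) * (pairing ρ i : ℝ) * w₀) := by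
        refine Finset.sum_le_sum fun i hi => ?_
        exact mul_le_mul_of_nonneg_left (key i (hsupp i hi)) (Nat.cast_nonneg _)
    _ = (1 - δ + β / (M + 1)) * (pairing ρ m : ℝ) * w₀ := by
        rw [hpm, Finset.mul_sum, Finset.sum_mul]
        exact Finset.sum_congr rfl fun i _ => by ring
end
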